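/- arXiv:1810.03448 — 2 statements merged into one kernel-verified Lean document; each statement's English description precedes it below -/
import Mathlib

section
/- Let μ be a partition of m and ν a partition of n. The maximal partitions λ of mn in the dominance order such that ⟨s_ν ∘ s_μ, s_λ⟩ ≥ 1 are precisely the maximal weights, in the dominance order, of the plethystic semistandard tableaux of shape μ^ν. Moreover, if λ is such a maximal partition, then ⟨s_ν ∘ s_μ, s_λ⟩ equals the number of plethystic semistandard tableaux of shape μ^ν and weight λ. -/
open scoped Classical

namespace Pleth

/-- A finitely supported function `f : ℕ → ℕ` is a partition when its values are weakly
decreasing.  Parts are indexed from `0`, so `f i` is the `(i+1)`-st part `λ_{i+1}`;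
parts beyond the length of the partition are `0`. -/
def IsPartition (f : ℕ →₀ ℕ) : Prop := ∀ i j : ℕ, i ≤ j → f j ≤ f i

/-- `f` is a partition of `n`. -/
def IsPartitionOf (f : ℕ →₀ ℕ) (n : ℕ) : Prop := IsPartition f ∧ f.sum (fun _ k => k) = n

/-- The multiset of (nonzero) parts of `f`. -/
def partsOf (f : ℕ →₀ ℕ) : Multiset ℕ := f.support.val.map f

/-- The rectangular partition `(v^r)` with `r` parts equal to `v`. -/
noncomputable def rect (r v : ℕ) : ℕ →₀ ℕ := (Finset.range r).sum fun i => Finsupp.single i v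

/-- The dominance order on compositions:  `Dominates α β` means `α ⊵ β`. -/
def Dominates (α β : ℕ →₀ ℕ) : Prop :=
  ∀ k : ℕ, ∑ i ∈ Finset.range k, β i ≤ ∑ i ∈ Finset.range k, α i

/-- The Young diagram of a (finitely supported) shape, with rows and columns indexed
from `0`: the cell `(i, j)` lies in row `i` and column `j`. -/
def cells (lam : ℕ →₀ ℕ) : Finset (ℕ × ℕ) :=
  (lam.support ×ˢ Finset.range (lam.support.sup lam)).filter fun p => p.2 < lam p.1

lemma mem_cells {lam : ℕ →₀ ℕ} {p : ℕ × ℕ} : p ∈ cells lam ↔ p.2 < lam p.1 := by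
  constructor
  · exact fun h => (Finset.mem_filter.mp h).2
  · intro h
    exact Finset.mem_filter.mpr ⟨Finset.mem_product.mpr
      ⟨Finsupp.mem_support_iff.mpr (by omega),
       Finset.mem_range.mpr (lt_of_lt_of_le h (Finset.le_sup (Finsupp.mem_support_iff.mpr (by omega))))⟩, h⟩

/-- The type of cells of the Young diagram of `lam`. -/
abbrev Cell (lam : ℕ →₀ ℕ) : Type := {p : ℕ × ℕ // p ∈ cells lam}

/-- A `lam`-tableau with entries in `B` is a function from the Young diagram of `lam` to `B`. -/
abbrev Tab (lam : ℕ →₀ ℕ) (B : Type*) : Type _ := Cell lam → B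

/-- The rows of `t` are weakly increasing with respect to the relation `le`. -/
def RowsWeak (lam : ℕ →₀ ℕ) {B : Type*} (le : B → B → Prop) (t : Tab lam B) : Prop :=
  ∀ p q : Cell lam, p.1.1 = q.1.1 → p.1.2 ≤ q.1.2 → le (t p) (t q)

/-- The columns of `t` are strictly increasing with respect to the relation `lt`. -/
def ColsStrict (lam : ℕ →₀ ℕ) {B : Type*} (lt : B → B → Prop) (t : Tab lam B) : Prop :=
  ∀ p q : Cell lam, p.1.2 = q.1.2 → p.1.1 < q.1.1 → lt (t p) (t q)

/-- A semistandard tableau: rows weakly increasing, columns strictly increasing. -/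
def IsSemistd (lam : ℕ →₀ ℕ) {B : Type*} [LinearOrder B] (t : Tab lam B) : Prop :=
  RowsWeak lam (· ≤ ·) t ∧ ColsStrict lam (· < ·) t

/-- The semistandard `lam`-tableaux with entries in `B`. -/
abbrev SSYT (lam : ℕ →₀ ℕ) (B : Type*) [LinearOrder B] : Type _ :=
  {t : Tab lam B // IsSemistd lam t}

/-- The coefficient of the monomial `x^α = x_0^{α 0} x_1^{α 1} ⋯` in the Schur function
`s_lam`, namely the number of semistandard `lam`-tableaux with entries in `ℕ`
(the entry `b` corresponding to the variable `x_b`) having exactly `α b` entries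
equal to `b` for every `b`. -/
noncomputable def schurCoeff (lam α : ℕ →₀ ℕ) : ℕ :=
  Nat.card {t : Tab lam ℕ // IsSemistd lam t ∧
    ∀ b : ℕ, α b = (Finset.univ.filter (fun p : Cell lam => t p = b)).card}

/-- The set of entries of column `j` of the tableau `t`. -/
noncomputable def colSet (lam : ℕ →₀ ℕ) {B : Type*} [LinearOrder B] (t : Tab lam B) (j : ℕ) :
    Finset B :=
  (Finset.univ.filter (fun p : Cell lam => p.1.2 = j)).image t

/-- The total order on (column-standard) tableaux:  `t < u` if and only if, in the rightmost
column in which `t` and `u` differ, the greatest entry not appearing in both columns lies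
in `u`. -/
def tabLT (lam : ℕ →₀ ℕ) {B : Type*} [LinearOrder B] (t u : Tab lam B) : Prop :=
  ∃ j : ℕ, colSet lam t j ≠ colSet lam u j ∧
    (∀ j' : ℕ, j < j' → colSet lam t j' = colSet lam u j') ∧
    ∃ m : B, m ∈ colSet lam u j ∧ m ∉ colSet lam t j ∧
      ∀ x : B, ((x ∈ colSet lam t j ∧ x ∉ colSet lam u j) ∨
                (x ∈ colSet lam u j ∧ x ∉ colSet lam t j)) → x ≤ m

def tabLE (lam : ℕ →₀ ℕ) {B : Type*} [LinearOrder B] (t u : Tab lam B) : Prop :=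
  t = u ∨ tabLT lam t u

/-- A plethystic semistandard tableau of shape `mu^nu`: a `nu`-tableau whose entries are
semistandard `mu`-tableaux, with rows weakly increasing and columns strictly increasing
with respect to the total order `tabLT` on semistandard `mu`-tableaux. -/
def IsPSSYT (mu nu : ℕ →₀ ℕ) {B : Type*} [LinearOrder B] (T : Tab nu (SSYT mu B)) : Prop :=
  RowsWeak nu (fun s s' => tabLE mu s.1 s'.1) T ∧
  ColsStrict nu (fun s s' => tabLT mu s.1 s'.1) T

/-- `T` has weight `α`: for every letter `b`, the total number of entries equal to `b`
among the `mu`-tableau entries of `T` is `α b`. -/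
def HasWeight (mu nu : ℕ →₀ ℕ) {B : Type*} [LinearOrder B] (T : Tab nu (SSYT mu B))
    (α : B → ℕ) : Prop :=
  ∀ b : B, α b = ∑ P : Cell nu,
    (Finset.univ.filter (fun p : Cell mu => (T P).1 p = b)).card

/-- The coefficient of the monomial `x^α` in the plethysm `s_nu ∘ s_mu`, namely the number
of plethystic semistandard tableaux of shape `mu^nu` and weight `α`. -/
noncomputable def plethCoeff (nu mu α : ℕ →₀ ℕ) : ℕ :=
  Nat.card {T : Tab nu (SSYT mu ℕ) // IsPSSYT mu nu T ∧ HasWeight mu nu T (fun b => α b)}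

end Pleth


namespace Pleth

lemma dominates_trans {a b g : ℕ →₀ ℕ} (h1 : Dominates a b) (h2 : Dominates b g) :
    Dominates a g := fun k => (h2 k).trans (h1 k)

lemma dominates_antisymm {a b : ℕ →₀ ℕ} (h1 : Dominates a b) (h2 : Dominates b a) :
    a = b := by
  have hs : ∀ k, ∑ i ∈ Finset.range k, a i = ∑ i ∈ Finset.range k, b i :=
    fun k => le_antisymm (h2 k) (h1 k)
  ext i
  have e1 := hs i
  have e2 := hs (i + 1)
  rw [Finset.sum_range_succ, Finset.sum_range_succ] at e2
  omega

lemma row_le_entry {κ : ℕ →₀ ℕ} (hκ : IsPartition κ) {t : Tab κ ℕ} (ht : IsSemistd κ t) :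
    ∀ i j (h : ((i, j) : ℕ × ℕ) ∈ cells κ), i ≤ t ⟨(i, j), h⟩ := by
  intro i
  induction i with
  | zero => intro j h; exact Nat.zero_le _
  | succ i ih =>
    intro j h
    have hj : j < κ (i + 1) := mem_cells.mp h
    have h' : ((i, j) : ℕ × ℕ) ∈ cells κ :=
      mem_cells.mpr (lt_of_lt_of_le hj (hκ i (i + 1) (by omega)))
    have h1 := ht.2 ⟨(i, j), h'⟩ ⟨(i + 1, j), h⟩ rfl (by simp)
    have h2 := ih j h'
    omega

lemma row_le_entry' {κ : ℕ →₀ ℕ} (hκ : IsPartition κ) {t : Tab κ ℕ} (ht : IsSemistd κ t)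
    (p : Cell κ) : p.1.1 ≤ t p :=
  row_le_entry hκ ht p.1.1 p.1.2 p.2

lemma row_card (κ : ℕ →₀ ℕ) (i : ℕ) :
    (Finset.univ.filter (fun p : Cell κ => p.1.1 = i)).card = κ i := by
  rw [← Finset.card_range (κ i)]
  refine Finset.card_bij' (fun p _ => p.1.2)
    (fun j hj => (⟨(i, j), mem_cells.mpr (Finset.mem_range.mp hj)⟩ : Cell κ)) ?_ ?_ ?_ ?_
  · intro p hp
    have h1 : p.1.1 = i := (Finset.mem_filter.mp hp).2
    have h2 := mem_cells.mp p.2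
    exact Finset.mem_range.mpr (h1 ▸ h2)
  · intro j hj; simp
  · intro p hp
    obtain ⟨⟨a, b⟩, hmem⟩ := p
    have h1 : a = i := (Finset.mem_filter.mp hp).2
    subst h1
    rfl
  · intro j hj; rfl

lemma card_filter_lt {κ : ℕ →₀ ℕ} (f : Cell κ → ℕ) (g : ℕ → ℕ)
    (hg : ∀ b, (Finset.univ.filter (fun p : Cell κ => f p = b)).card = g b) (k : ℕ) :
    (Finset.univ.filter (fun p : Cell κ => f p < k)).card = ∑ b ∈ Finset.range k, g b := by
  induction k with
  | zero => simp
  | succ k ih =>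
    have hsplit : (Finset.univ.filter (fun p : Cell κ => f p < k + 1))
        = Finset.univ.filter (fun p : Cell κ => f p < k)
          ∪ Finset.univ.filter (fun p : Cell κ => f p = k) := by
      ext p
      simp only [Finset.mem_filter, Finset.mem_union, Finset.mem_univ, true_and]
      omega
    have hdisj : Disjoint (Finset.univ.filter (fun p : Cell κ => f p < k))
        (Finset.univ.filter (fun p : Cell κ => f p = k)) := by
      rw [Finset.disjoint_left]
      intro p hp hq
      simp only [Finset.mem_filter, Finset.mem_univ, true_and] at hp hq
      omega
    rw [Finset.sum_range_succ, ← ih, ← hg k, hsplit, Finset.card_union_of_disjoint hdisj]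

lemma schur_dominates {κ α : ℕ →₀ ℕ} (hκ : IsPartition κ) (h : schurCoeff κ α ≠ 0) :
    Dominates κ α := by
  obtain ⟨⟨t, ht, hw⟩⟩ := (Nat.card_ne_zero.mp h).1
  intro k
  rw [← card_filter_lt (fun p : Cell κ => t p) (fun b => α b) (fun b => (hw b).symm) k,
      ← card_filter_lt (fun p : Cell κ => p.1.1) (fun i => κ i) (fun i => row_card κ i) k]
  apply Finset.card_le_card
  intro p hp
  simp only [Finset.mem_filter, Finset.mem_univ, true_and] at hp ⊢
  exact lt_of_le_of_lt (row_le_entry' hκ ht p) hp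

lemma ssyt_weight_self_eq {κ : ℕ →₀ ℕ} (hκ : IsPartition κ) {t : Tab κ ℕ}
    (ht : IsSemistd κ t)
    (hw : ∀ b, κ b = (Finset.univ.filter (fun p : Cell κ => t p = b)).card) :
    ∀ p : Cell κ, t p = p.1.1 := by
  intro p
  have hge := row_le_entry' hκ ht p
  have h1 := card_filter_lt (fun q : Cell κ => t q) (fun b => κ b)
    (fun b => (hw b).symm) (p.1.1 + 1)
  have h2 := card_filter_lt (fun q : Cell κ => q.1.1) (fun i => κ i)
    (fun i => row_card κ i) (p.1.1 + 1)
  have hsub : Finset.univ.filter (fun q : Cell κ => t q < p.1.1 + 1)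
      ⊆ Finset.univ.filter (fun q : Cell κ => q.1.1 < p.1.1 + 1) := by
    intro q hq
    simp only [Finset.mem_filter, Finset.mem_univ, true_and] at hq ⊢
    exact lt_of_le_of_lt (row_le_entry' hκ ht q) hq
  have heq := Finset.eq_of_subset_of_card_le hsub (by rw [h1, h2])
  have hp : p ∈ Finset.univ.filter (fun q : Cell κ => q.1.1 < p.1.1 + 1) := by simp
  rw [← heq] at hp
  have := (Finset.mem_filter.mp hp).2
  omega

lemma schur_self {κ : ℕ →₀ ℕ} (hκ : IsPartition κ) : schurCoeff κ κ = 1 := by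
  rw [schurCoeff, Nat.card_eq_one_iff_unique]
  constructor
  · constructor
    rintro ⟨t, ht, hwt⟩ ⟨u, hu, hwu⟩
    apply Subtype.ext
    funext p
    show t p = u p
    rw [ssyt_weight_self_eq hκ ht hwt p, ssyt_weight_self_eq hκ hu hwu p]
  · refine ⟨⟨fun p => p.1.1, ⟨?_, ?_⟩, ?_⟩⟩
    · intro p q hpq _
      exact le_of_eq hpq
    · intro p q _ hlt
      exact hlt
    · intro b
      exact (row_card κ b).symm

lemma pleth_bound {mu nu α : ℕ →₀ ℕ} {T : Tab nu (SSYT mu ℕ)}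
    (hw : HasWeight mu nu T (fun b => α b)) (P : Cell nu) (p : Cell mu) :
    (T P).1 p < α.support.sup id + 1 := by
  set b := (T P).1 p with hb
  have h1 : 1 ≤ (Finset.univ.filter (fun q : Cell mu => (T P).1 q = b)).card :=
    Finset.card_pos.mpr ⟨p, Finset.mem_filter.mpr ⟨Finset.mem_univ p, rfl⟩⟩
  have h2 : 1 ≤ α b := by
    refine le_trans (le_trans h1 ?_) (le_of_eq (hw b).symm)
    exact (Finset.single_le_sum
      (f := fun P' : Cell nu =>
        (Finset.univ.filter (fun q : Cell mu => (T P').1 q = b)).card)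
      (fun _ _ => Nat.zero_le _) (Finset.mem_univ P))
  have hmem : b ∈ α.support := Finsupp.mem_support_iff.mpr (by omega)
  have := Finset.le_sup (f := id) hmem
  simp only [id] at this
  omega

lemma pleth_finite (mu nu α : ℕ →₀ ℕ) :
    Finite {T : Tab nu (SSYT mu ℕ) // IsPSSYT mu nu T ∧ HasWeight mu nu T (fun b => α b)} := by
  apply Finite.of_injective (fun T (P : Cell nu) (p : Cell mu) =>
    (⟨(T.1 P).1 p, pleth_bound T.2.2 P p⟩ : Fin (α.support.sup id + 1)))
  intro T U h
  apply Subtype.ext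
  funext P
  apply Subtype.ext
  funext p
  exact congrArg Fin.val (congrFun (congrFun h P) p)

lemma pleth_pos {mu nu α : ℕ →₀ ℕ} (T : Tab nu (SSYT mu ℕ)) (hT : IsPSSYT mu nu T)
    (hw : HasWeight mu nu T (fun b => α b)) : plethCoeff nu mu α ≠ 0 := by
  have hfin := pleth_finite mu nu α
  exact Nat.card_ne_zero.mpr ⟨⟨⟨T, hT, hw⟩⟩, hfin⟩

end Pleth

namespace Pleth

/-- **Theorem 4 (maximal constituents of a plethysm).**
Let `μ ⊢ m` and `ν ⊢ n`, and let `c` be the (arbitrary) Schur-basis expansion of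
`s_ν ∘ s_μ`, so that `c λ = ⟨s_ν ∘ s_μ, s_λ⟩`.  Then a partition `λ` of `mn` is a maximal
partition, in the dominance order, with `⟨s_ν ∘ s_μ, s_λ⟩ ≥ 1` if and only if `λ` is a
maximal weight, in the dominance order, of the plethystic semistandard tableaux of shape
`μ^ν`.  Moreover, for such `λ`, the multiplicity `⟨s_ν ∘ s_μ, s_λ⟩` equals the number of
plethystic semistandard tableaux of shape `μ^ν` and weight `λ`. -/
theorem maximal_constituents (m n : ℕ) (hm : 0 < m) (hn : 0 < n)
    (mu nu : ℕ →₀ ℕ) (hmu : IsPartitionOf mu m) (hnu : IsPartitionOf nu n)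
    (c : (ℕ →₀ ℕ) → ℕ)
    (hc0 : (Function.support c).Finite)
    (hc1 : ∀ κ, c κ ≠ 0 → IsPartitionOf κ (m * n))
    (hc : ∀ α : ℕ →₀ ℕ, plethCoeff nu mu α = ∑ᶠ κ, c κ * schurCoeff κ α)
    (lam : ℕ →₀ ℕ) :
    ((IsPartitionOf lam (m * n) ∧ 1 ≤ c lam ∧
        ∀ κ : ℕ →₀ ℕ, IsPartitionOf κ (m * n) → 1 ≤ c κ → Dominates κ lam → κ = lam)
      ↔
      ((∃ T : Tab nu (SSYT mu ℕ), IsPSSYT mu nu T ∧ HasWeight mu nu T (fun b => lam b)) ∧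
        ∀ (α : ℕ →₀ ℕ) (T : Tab nu (SSYT mu ℕ)), IsPSSYT mu nu T →
          HasWeight mu nu T (fun b => α b) → Dominates α lam → α = lam))
    ∧
    ((IsPartitionOf lam (m * n) ∧ 1 ≤ c lam ∧
        ∀ κ : ℕ →₀ ℕ, IsPartitionOf κ (m * n) → 1 ≤ c κ → Dominates κ lam → κ = lam) →
      c lam = Nat.card {T : Tab nu (SSYT mu ℕ) //
        IsPSSYT mu nu T ∧ HasWeight mu nu T (fun b => lam b)}) := by
  -- support finiteness of the summands
  have hfin : ∀ α : ℕ →₀ ℕ,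
      (Function.support fun κ => c κ * schurCoeff κ α).Finite := by
    intro α
    apply hc0.subset
    intro κ hκ
    simp only [Function.mem_support] at hκ ⊢
    intro h0
    exact hκ (by rw [h0, zero_mul])
  -- a nonzero plethysm coefficient forces a nonzero product term
  have key1 : ∀ α : ℕ →₀ ℕ, plethCoeff nu mu α ≠ 0 →
      ∃ κ, c κ ≠ 0 ∧ schurCoeff κ α ≠ 0 := by
    intro α hα
    by_contra hno
    push_neg at hno
    apply hα
    rw [hc α]
    apply finsum_eq_zero_of_forall_eq_zero
    intro κ
    by_cases h0 : c κ = 0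
    · rw [h0, zero_mul]
    · rw [hno κ h0, mul_zero]
  -- each term bounds the plethysm coefficient
  have key2 : ∀ α κ : ℕ →₀ ℕ, c κ * schurCoeff κ α ≤ plethCoeff nu mu α := by
    intro α κ
    rw [hc α]
    exact single_le_finsum κ (hfin α) (fun _ => Nat.zero_le _)
  -- under the LHS hypothesis, the plethysm coefficient at lam equals c lam
  have hpleq : (IsPartitionOf lam (m * n) ∧ 1 ≤ c lam ∧
        ∀ κ : ℕ →₀ ℕ, IsPartitionOf κ (m * n) → 1 ≤ c κ → Dominates κ lam → κ = lam) →
      plethCoeff nu mu lam = c lam := by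
    rintro ⟨hlam, _, hmax⟩
    rw [hc lam, finsum_eq_single _ lam, schur_self hlam.1, mul_one]
    intro κ hκ
    by_cases h1 : c κ = 0
    · rw [h1, zero_mul]
    by_cases h2 : schurCoeff κ lam = 0
    · rw [h2, mul_zero]
    exact absurd (hmax κ (hc1 κ h1) (Nat.one_le_iff_ne_zero.mpr h1)
      (schur_dominates (hc1 κ h1).1 h2)) hκ
  constructor
  · constructor
    · rintro ⟨hlam, hclam, hmax⟩
      constructor
      · -- existence of a PSSYT of weight lam
        have hne : plethCoeff nu mu lam ≠ 0 := by
          rw [hpleq ⟨hlam, hclam, hmax⟩]; omega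
        obtain ⟨⟨T, hT, hw⟩⟩ := (Nat.card_ne_zero.mp hne).1
        exact ⟨T, hT, hw⟩
      · -- maximality of lam among PSSYT weights
        intro α T hT hw hdom
        obtain ⟨κ, hcκ, hsκ⟩ := key1 α (pleth_pos T hT hw)
        have hκp := hc1 κ hcκ
        have hκα : Dominates κ α := schur_dominates hκp.1 hsκ
        have hκlam : κ = lam := hmax κ hκp (Nat.one_le_iff_ne_zero.mpr hcκ)
          (dominates_trans hκα hdom)
        exact dominates_antisymm hdom (hκlam ▸ hκα)
    · rintro ⟨⟨T, hT, hw⟩, hmaxw⟩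
      -- find the dominating constituent, which must equal lam
      obtain ⟨κ, hcκ, hsκ⟩ := key1 lam (pleth_pos T hT hw)
      have hκp := hc1 κ hcκ
      have hdomκ : Dominates κ lam := schur_dominates hκp.1 hsκ
      have hκne : plethCoeff nu mu κ ≠ 0 := by
        have h := key2 κ κ
        rw [schur_self hκp.1, mul_one] at h
        omega
      obtain ⟨⟨T', hT', hw'⟩⟩ := (Nat.card_ne_zero.mp hκne).1
      have hκlam : κ = lam := hmaxw κ T' hT' hw' hdomκ
      refine ⟨hκlam ▸ hκp, Nat.one_le_iff_ne_zero.mpr (hκlam ▸ hcκ), ?_⟩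
      intro κ' hκ'p hcκ' hdom'
      have hκ'ne : plethCoeff nu mu κ' ≠ 0 := by
        have h := key2 κ' κ'
        rw [schur_self hκ'p.1, mul_one] at h
        omega
      obtain ⟨⟨T'', hT'', hw''⟩⟩ := (Nat.card_ne_zero.mp hκ'ne).1
      exact hmaxw κ' T'' hT'' hw'' hdom'
  · intro hyp
    exact (hpleq hyp).symm


end Pleth
end

section
/- Let K be a commutative ring, B a totally ordered set, V a free K-module with basis indexed by B, and λ a partition. Then the set {F(s) : s a semistandard λ-tableau with entries from B} of GL-polytabloids is a K-basis for ∇^λ(V). -/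
open scoped Classical

namespace Pleth

/-- The canonical index type for the basis of `Sym^lam V`, where `V` is free with basis `B`:
one multiset of entries (of the right size) for each row of the Young diagram. -/
abbrev RowData (lam : ℕ →₀ ℕ) (B : Type*) : Type _ := (i : ℕ) → Sym B (lam i)

/-- A concrete model for `Sym^lam V = ⊗_i Sym^{lam_i} V`, where `V` is the free `K`-module
with basis `{v_b : b ∈ B}`:  the free `K`-module on the GL-tabloids, i.e. on `RowData lam B`. -/
abbrev SymMod (lam : ℕ →₀ ℕ) (B : Type*) (K : Type*) [Semiring K] : Type _ :=
  RowData lam B →₀ K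

/-- The multisets of row entries of a tableau. -/
def rowData (lam : ℕ →₀ ℕ) {B : Type*} (t : Tab lam B) : RowData lam B := fun i =>
  ⟨(Finset.range (lam i)).attach.val.map
      (fun j => t ⟨(i, j.1), mem_cells.mpr (Finset.mem_range.mp j.2)⟩), by rw [Multiset.card_map, ← Finset.card_def, Finset.card_attach, Finset.card_range]⟩

/-- The GL-tabloid `f(t) = ⊗_i ∏_j v_{t(i,j)} ∈ Sym^lam V`. -/
noncomputable def tabloid (K : Type*) [CommRing K] (lam : ℕ →₀ ℕ) {B : Type*}
    (t : Tab lam B) : SymMod lam B K :=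
  Finsupp.single (rowData lam t) 1

/-- The place-permutation action: `(t σ) (x) = t (σ⁻¹ x)`. -/
def permTab (lam : ℕ →₀ ℕ) {B : Type*} (t : Tab lam B) (σ : Equiv.Perm (Cell lam)) :
    Tab lam B := fun p => t (σ⁻¹ p)

/-- `σ` preserves each column of the Young diagram, i.e. `σ ∈ CPP(lam)`. -/
def ColPres (lam : ℕ →₀ ℕ) (σ : Equiv.Perm (Cell lam)) : Prop :=
  ∀ p : Cell lam, (σ p).1.2 = p.1.2

/-- The GL-polytabloid `F(t) = ∑_{σ ∈ CPP(lam)} sgn(σ) f(tσ)`. -/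
noncomputable def polytabloid (K : Type*) [CommRing K] (lam : ℕ →₀ ℕ) {B : Type*}
    (t : Tab lam B) : SymMod lam B K :=
  ∑ σ : Equiv.Perm (Cell lam),
    if ColPres lam σ then ((Equiv.Perm.sign σ : ℤ) • tabloid K lam (permTab lam t σ)) else 0

/-- `∇^lam (V)`: the `K`-submodule of `Sym^lam V` spanned by the GL-polytabloids. -/
noncomputable def nabla (K : Type*) [CommRing K] (lam : ℕ →₀ ℕ) (B : Type*) :
    Submodule K (SymMod lam B K) :=
  Submodule.span K (Set.range (fun t : Tab lam B => polytabloid K lam t))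

/-- The number of entries `≤ b` in row `i` of `t`; as a function of `i` this is the
composition `t^{≤ b}`. -/
noncomputable def rowCountLe (lam : ℕ →₀ ℕ) {B : Type*} [LinearOrder B] (t : Tab lam B)
    (b : B) (i : ℕ) : ℕ :=
  (Finset.univ.filter (fun p : Cell lam => p.1.1 = i ∧ t p ≤ b)).card

/-- The dominance order on (row-semistandard) tableaux of the same shape:
`t ⊵ u` iff `t^{≤b} ⊵ u^{≤b}` for every `b`. -/
def TabDom (lam : ℕ →₀ ℕ) {B : Type*} [LinearOrder B] (t u : Tab lam B) : Prop :=
  ∀ b : B, ∀ k : ℕ,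
    ∑ i ∈ Finset.range k, rowCountLe lam u b i ≤ ∑ i ∈ Finset.range k, rowCountLe lam t b i

/-- `t̄`: the tableau obtained from `t` by sorting each row into weakly increasing order. -/
noncomputable def rowsort (lam : ℕ →₀ ℕ) {B : Type*} [LinearOrder B] (t : Tab lam B) :
    Tab lam B :=
  fun p => (List.insertionSort (· ≤ ·) ((List.range (lam p.1.1)).attach.map
      (fun j => t ⟨(p.1.1, j.1), mem_cells.mpr (List.mem_range.mp j.2)⟩))).getD p.1.2 (t p)

end Pleth

/-
Linear independence is a triangularity argument. Let `countLE t k b` count the entries `≤ b` in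
the first `k` rows of `t`. If `s` is column strict and `σ` preserves columns, then in each column
the entries `≤ b` of `s` form an initial segment, so `countLE (sσ) ≤ countLE s` pointwise, with
equality only when `sσ = s`, i.e. `σ = 1`. In a nontrivial relation among the `F(s)`, take `s₀`
with maximal `countLE`: the tabloid `f(s₀)` then occurs in no other `F(s)` and exactly once in
`F(s₀)`, since a semistandard tableau is determined by its row multisets.

Spanning is proved over `ℤ` and transported to `K` along `ℤ → K`, by induction on the column
weight `∑_p col(p) · rank(t p)` and then the row weight `∑_p row(p) · rank(t p)`. If a column of
`t` repeats an entry then `F(t) = 0`; if a column is out of order, a column transposition changes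
`F(t)` only by a sign and raises the row weight. If `t` is column strict but a row descends, from
`p` to `q` further right, the Garnir relation for the cells of `p`'s column weakly below `p` and
of `q`'s column weakly above `q` (more cells than `p`'s column has) writes `F(t)` through `F(tσ)`
of larger column weight.
-/

theorem QuotientGroup.sum_mk_eq_card_nsmul {G M : Type*} [Group G] [Fintype G]
    [AddCommMonoid M] (H : Subgroup G) (w : G ⧸ H → M) :
    ∑ g : G, w g = Fintype.card H • ∑ q : G ⧸ H, w q := by
  let e := Subgroup.groupEquivQuotientProdSubgroup (s := H)
  have he (x : (G ⧸ H) × H) : ((e.symm x : G) : G ⧸ H) = x.1 :=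
    congrArg Prod.fst (e.apply_symm_apply x)
  rw [← Fintype.sum_equiv e.symm _ _ fun x => rfl, Fintype.sum_prod_type, Finset.smul_sum]
  simp only [he, Finset.sum_const, Finset.card_univ]

theorem Fintype.sum_mul_pos_of_sum_eq_zero {ι : Type*} [Fintype ι] {δ w : ι → ℤ} (c : ℤ)
    (hsum : ∑ i, δ i = 0) (hpos : ∀ i, 0 < δ i → c < w i) (hneg : ∀ i, δ i < 0 → w i ≤ c)
    (hne : ∃ i, δ i ≠ 0) : 0 < ∑ i, δ i * w i := by
  have hshift : ∑ i, δ i * w i = ∑ i, δ i * (w i - c) := by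
    simp [mul_sub, Finset.sum_sub_distrib, ← Finset.sum_mul, hsum]
  obtain ⟨i, hi⟩ : ∃ i, 0 < δ i := by
    by_contra! h
    obtain ⟨i, hi⟩ := hne
    exact hi ((Finset.sum_eq_zero_iff_of_nonpos fun i _ => h i).mp hsum i (Finset.mem_univ i))
  rw [hshift]
  refine Finset.sum_pos' (fun k _ => ?_)
    ⟨i, Finset.mem_univ i, mul_pos hi (sub_pos.mpr (hpos i hi))⟩
  rcases lt_trichotomy (δ k) 0 with h | h | h
  · exact mul_nonneg_of_nonpos_of_nonpos h.le (sub_nonpos.mpr (hneg k h))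
  · simp [h]
  · exact (mul_pos h (sub_pos.mpr (hpos k h))).le

section FixingSubgroup

variable {α : Type*} {X : Finset α}

lemma swap_mem_fixingSubgroup_compl [DecidableEq α] {p q : α} (hp : p ∈ X) (hq : q ∈ X) :
    Equiv.swap p q ∈ fixingSubgroup (Equiv.Perm α) ((X : Set α)ᶜ) :=
  (mem_fixingSubgroup_iff _).mpr fun _ hr =>
    Equiv.swap_apply_of_ne_of_ne (fun h => hr (h ▸ hp)) (fun h => hr (h ▸ hq))

lemma mem_and_apply_mem_of_mem_fixingSubgroup_compl {σ : Equiv.Perm α}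
    (hσ : σ ∈ fixingSubgroup (Equiv.Perm α) ((X : Set α)ᶜ)) {r : α} (hr : σ r ≠ r) :
    r ∈ X ∧ σ r ∈ X := by
  have hfix (x : α) (hx : x ∉ X) : σ x = x := (mem_fixingSubgroup_iff _).mp hσ x hx
  exact ⟨by_contra fun h => hr (hfix r h), by_contra fun h => hr (σ.injective (hfix _ h))⟩

end FixingSubgroup

namespace Pleth

open Finset Equiv

section Polytabloid

variable {lam : ℕ →₀ ℕ} {B : Type*}

lemma cell_ext {p q : Cell lam} (h₁ : p.1.1 = q.1.1) (h₂ : p.1.2 = q.1.2) : p = q :=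
  Subtype.ext (Prod.ext h₁ h₂)

lemma permTab_one (t : Tab lam B) : permTab lam t 1 = t := rfl

lemma permTab_permTab (t : Tab lam B) (σ τ : Perm (Cell lam)) :
    permTab lam (permTab lam t σ) τ = permTab lam t (τ * σ) := by
  funext p
  simp [permTab]

lemma permTab_swap_of_eq {t : Tab lam B} {p q : Cell lam} (h : t p = t q) :
    permTab lam t (swap p q) = t :=
  funext (apply_swap_eq_self h)

def colGroup (lam : ℕ →₀ ℕ) : Subgroup (Perm (Cell lam)) where
  carrier := {σ | ColPres lam σ}
  mul_mem' ha hb p := (ha _).trans (hb p)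
  one_mem' _ := rfl
  inv_mem' {σ} h p := by simpa using (h (σ⁻¹ p)).symm

lemma mem_colGroup {σ : Perm (Cell lam)} : σ ∈ colGroup lam ↔ ColPres lam σ := Iff.rfl

lemma swap_mem_colGroup {p q : Cell lam} (h : p.1.2 = q.1.2) : swap p q ∈ colGroup lam :=
  apply_swap_eq_self (v := fun r : Cell lam => r.1.2) h

lemma rowData_val (t : Tab lam B) (i : ℕ) :
    (rowData lam t i : Multiset B) = (univ.filter fun p : Cell lam => p.1.1 = i).val.map t := by
  have hrow : (univ.filter fun p : Cell lam => p.1.1 = i) = (range (lam i)).attach.map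
      ⟨fun j => ⟨(i, j.1), mem_cells.mpr (mem_range.mp j.2)⟩, fun a b h => by
        simpa using congrArg (fun p : Cell lam => p.1.2) h⟩ := by
    ext p
    simp only [mem_filter, mem_univ, true_and, mem_map, mem_attach]
    refine ⟨fun hp => ⟨⟨p.1.2, mem_range.mpr (hp ▸ mem_cells.mp p.2)⟩, cell_ext hp.symm rfl⟩, ?_⟩
    rintro ⟨j, rfl⟩
    rfl
  rw [hrow, map_val, Multiset.map_map]
  rfl

lemma rowData_permTab_of_forall_row_eq (t : Tab lam B) {σ : Perm (Cell lam)}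
    (hσ : ∀ p, (σ p).1.1 = p.1.1) : rowData lam (permTab lam t σ) = rowData lam t := by
  funext i
  apply Sym.coe_injective
  have hrow : (univ.filter fun p : Cell lam => p.1.1 = i).map σ⁻¹.toEmbedding =
      univ.filter fun p : Cell lam => p.1.1 = i := by
    ext p
    simp [Perm.inv_def, hσ]
  rw [rowData_val, rowData_val]
  conv_rhs => rw [← hrow]
  rw [map_val, Multiset.map_map]
  rfl

variable {K : Type*} [CommRing K]

lemma polytabloid_eq_sum_colGroup (t : Tab lam B) :
    polytabloid K lam t =
      ∑ σ : colGroup lam,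
        (Perm.sign (σ : Perm (Cell lam)) : ℤ) • tabloid K lam (permTab lam t σ) := by
  rw [polytabloid, ← sum_filter]
  exact sum_subtype _ (by simp [mem_colGroup]) _

lemma polytabloid_permTab (t : Tab lam B) {τ : Perm (Cell lam)} (hτ : τ ∈ colGroup lam) :
    polytabloid K lam (permTab lam t τ) = (Perm.sign τ : ℤ) • polytabloid K lam t := by
  simp_rw [polytabloid_eq_sum_colGroup, permTab_permTab, smul_sum, smul_smul]
  refine Fintype.sum_equiv (Equiv.mulRight ⟨τ, hτ⟩) _ _ fun σ => ?_
  simp only [coe_mulRight, Subgroup.coe_mul, Perm.sign_mul, Units.val_mul]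
  rw [mul_left_comm, Int.units_coe_mul_self, mul_one]

lemma polytabloid_eq_zero_of_apply_eq {t : Tab lam B} {p q : Cell lam} (hpq : p ≠ q)
    (hcol : p.1.2 = q.1.2) (h : t p = t q) : polytabloid ℤ lam t = 0 := by
  have := polytabloid_permTab (K := ℤ) t (swap_mem_colGroup hcol)
  rw [permTab_swap_of_eq h, Perm.sign_swap hpq] at this
  exact self_eq_neg.mp (by simpa using this)

lemma mapRange_polytabloid (t : Tab lam B) :
    Finsupp.mapRange.addMonoidHom (Int.castAddHom K) (polytabloid ℤ lam t) =
      polytabloid K lam t := by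
  simp [polytabloid_eq_sum_colGroup, tabloid]

lemma exists_ne_row_eq_of_card_col_lt {X : Finset (Cell lam)} {j : ℕ} (hX : ∀ p ∈ X, j ≤ p.1.2)
    (hcard : #{p : Cell lam | p.1.2 = j} < #X) {τ : Perm (Cell lam)} (hτ : τ ∈ colGroup lam) :
    ∃ p ∈ X, ∃ q ∈ X, p ≠ q ∧ (τ p).1.1 = (τ q).1.1 := by
  refine exists_ne_map_eq_of_card_lt_of_maps_to
    (t := (univ.filter fun p : Cell lam => p.1.2 = j).image fun p => p.1.1)
    (card_image_le.trans_lt hcard) fun p hp => ?_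
  have hj : j < lam (τ p).1.1 := (hX p hp).trans_lt ((hτ p).symm ▸ mem_cells.mp (τ p).2)
  exact mem_image.mpr ⟨⟨((τ p).1.1, j), mem_cells.mpr hj⟩, by simp, rfl⟩

lemma sum_sign_smul_polytabloid_eq_zero (t : Tab lam B) {X : Finset (Cell lam)} {j : ℕ}
    (hX : ∀ p ∈ X, j ≤ p.1.2) (hcard : #{p : Cell lam | p.1.2 = j} < #X) :
    ∑ σ : fixingSubgroup (Perm (Cell lam)) ((X : Set (Cell lam))ᶜ),
      (Perm.sign (σ : Perm (Cell lam)) : ℤ) • polytabloid K lam (permTab lam t σ) = 0 := by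
  simp_rw [polytabloid_eq_sum_colGroup, permTab_permTab, smul_sum]
  rw [sum_comm]
  refine sum_eq_zero fun τ _ => ?_
  obtain ⟨p, hp, q, hq, hpq, hrow⟩ := exists_ne_row_eq_of_card_col_lt hX hcard τ.2
  -- two cells of `X` share a row of `tτ`: their transposition changes the sign, not the tabloid
  let g : fixingSubgroup (Perm (Cell lam)) ((X : Set (Cell lam))ᶜ) :=
    ⟨swap p q, swap_mem_fixingSubgroup_compl hp hq⟩
  refine sum_ninvolution (g * ·) (fun σ => ?_) (fun σ _ h => hpq ?_) (fun _ => mem_univ _)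
    (fun σ => by simp [g, ← mul_assoc])
  · have htab : tabloid K lam (permTab lam t (τ * (swap p q * σ))) =
        tabloid K lam (permTab lam t (τ * σ)) := by
      have hconj : (τ : Perm (Cell lam)) * swap p q = swap (τ.1 p) (τ.1 q) * τ := by
        rw [swap_apply_apply, inv_mul_cancel_right]
      rw [tabloid, tabloid, ← mul_assoc, hconj, mul_assoc, ← permTab_permTab,
        rowData_permTab_of_forall_row_eq _
          (apply_swap_eq_self (v := fun r : Cell lam => r.1.1) hrow)]
    rw [Subgroup.coe_mul, htab, smul_smul, smul_smul, ← add_smul]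
    simp [g, Perm.sign_swap hpq]
  · have hg : g = 1 := mul_eq_right.mp h
    simpa [g, eq_comm] using
      congrArg (fun σ' : fixingSubgroup _ _ => (σ' : Perm (Cell lam)) p) hg

/-- The terms of the alternating sum in `sum_sign_smul_polytabloid_eq_zero` are constant on the
cosets of the column-preserving permutations of `X`; dividing by their number is where `ℤ`
(being torsion free) is needed. -/
lemma polytabloid_mem_span_garnir (t : Tab lam B) {X : Finset (Cell lam)} {j : ℕ}
    (hX : ∀ p ∈ X, j ≤ p.1.2) (hcard : #{p : Cell lam | p.1.2 = j} < #X) :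
    polytabloid ℤ lam t ∈ Submodule.span ℤ ((fun σ => polytabloid ℤ lam (permTab lam t σ)) ''
      {σ | σ ∈ fixingSubgroup (Perm (Cell lam)) ((X : Set (Cell lam))ᶜ) ∧ σ ∉ colGroup lam}) := by
  let G := fixingSubgroup (Perm (Cell lam)) ((X : Set (Cell lam))ᶜ)
  let H := (colGroup lam).subgroupOf G
  let v (g : G) : SymMod lam B ℤ := (Perm.sign (g : Perm (Cell lam)) : ℤ) •
    polytabloid ℤ lam (permTab lam t (g : Perm (Cell lam))⁻¹)
  have hv (g : G) : v g = v (g : G ⧸ H).out := by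
    obtain ⟨h, hh⟩ := QuotientGroup.mk_out_eq_mul H g
    have hh' : (h : Perm (Cell lam))⁻¹ ∈ colGroup lam :=
      inv_mem (Subgroup.mem_subgroupOf.mp h.2)
    rw [hh]
    simp only [v, Subgroup.coe_mul, mul_inv_rev, ← permTab_permTab, polytabloid_permTab _ hh',
      smul_smul, Perm.sign_mul, Perm.sign_inv, Units.val_mul]
    rw [mul_assoc, Int.units_coe_mul_self, mul_one]
  have hsum : Fintype.card H • ∑ q : G ⧸ H, v q.out = 0 := by
    rw [← QuotientGroup.sum_mk_eq_card_nsmul H fun q => v q.out, ← Fintype.sum_congr _ _ hv,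
      ← sum_sign_smul_polytabloid_eq_zero t hX hcard]
    exact Fintype.sum_equiv (Equiv.inv G) _ _ fun g => by simp [v]
  rw [smul_eq_zero, Fintype.sum_eq_add_sum_compl ((1 : G) : G ⧸ H), ← hv] at hsum
  have hF : polytabloid ℤ lam t = -∑ q ∈ {((1 : G) : G ⧸ H)}ᶜ, v q.out := by
    simpa [v, permTab_one] using
      eq_neg_of_add_eq_zero_left (hsum.resolve_left Fintype.card_ne_zero)
  rw [hF]
  refine neg_mem (Submodule.sum_mem _ fun q hq => Submodule.smul_mem _ _ (Submodule.subset_span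
    ⟨_, ⟨inv_mem q.out.2, fun hcol => ?_⟩, rfl⟩))
  refine mem_compl.mp hq (mem_singleton.mpr ?_)
  rw [← QuotientGroup.out_eq' q, QuotientGroup.eq]
  simpa [H, Subgroup.mem_subgroupOf] using inv_mem hcol

end Polytabloid

section LinearIndependence

variable {lam : ℕ →₀ ℕ} {B : Type*} [LinearOrder B]

lemma ColsStrict.eq_of_apply_eq {s : Tab lam B} (hs : ColsStrict lam (· < ·) s) {p q : Cell lam}
    (hcol : p.1.2 = q.1.2) (h : s p = s q) : p = q := by
  rcases lt_trichotomy p.1.1 q.1.1 with hlt | heq | hgt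
  · exact absurd h (hs p q hcol hlt).ne
  · exact cell_ext heq hcol
  · exact absurd h (hs q p hcol.symm hgt).ne'

lemma RowsWeak.eq_of_rowData_eq {s t : Tab lam B} (hs : RowsWeak lam (· ≤ ·) s)
    (ht : RowsWeak lam (· ≤ ·) t) (h : rowData lam s = rowData lam t) : s = t := by
  funext ⟨⟨i, j⟩, hij⟩
  let row (u : Tab lam B) : List B := (List.range (lam i)).attach.map
    fun j => u ⟨(i, j.1), mem_cells.mpr (List.mem_range.mp j.2)⟩
  have hsorted {u : Tab lam B} (hu : RowsWeak lam (· ≤ ·) u) : (row u).Pairwise (· ≤ ·) := by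
    have hlt : (List.range (lam i)).attach.Pairwise (fun a b => a.1 < b.1) := by
      rw [← List.pairwise_map (f := Subtype.val), List.attach_map_subtype_val]
      exact List.pairwise_lt_range
    exact List.pairwise_map.mpr
      (hlt.imp fun {a b} hab => hu ⟨(i, a.1), _⟩ ⟨(i, b.1), _⟩ rfl hab.le)
  have hrow : row s = row t := (Multiset.coe_eq_coe.mp
    (congrArg (fun ρ : RowData lam B => (ρ i : Multiset B)) h)).eq_of_pairwise'
      (hsorted hs) (hsorted ht)
  exact List.map_inj_left.mp hrow ⟨j, List.mem_range.mpr (mem_cells.mp hij)⟩ (List.mem_attach _ _)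

noncomputable def countLE (t : Tab lam B) (k : ℕ) (b : B) : ℕ :=
  #{p : Cell lam | p.1.1 < k ∧ t p ≤ b}

noncomputable def colCountLE (t : Tab lam B) (j k : ℕ) (b : B) : ℕ :=
  #{p : Cell lam | p.1.2 = j ∧ p.1.1 < k ∧ t p ≤ b}

lemma countLE_eq_sum_countP (t : Tab lam B) (k : ℕ) (b : B) :
    countLE t k b = ∑ i ∈ range k, (rowData lam t i : Multiset B).countP (· ≤ b) := by
  rw [countLE, card_eq_sum_card_fiberwise (f := fun p : Cell lam => p.1.1) (t := range k)
    fun p hp => mem_range.mpr (mem_filter.mp hp).2.1]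
  refine sum_congr rfl fun i hi => ?_
  rw [rowData_val, Multiset.countP_map, ← filter_val, ← card_val, filter_filter]
  congr 2
  ext p
  simp only [mem_filter, mem_univ, true_and]
  constructor
  · rintro ⟨⟨-, hb⟩, rfl⟩; exact ⟨rfl, hb⟩
  · rintro ⟨rfl, hb⟩; exact ⟨⟨mem_range.mp hi, hb⟩, rfl⟩

lemma countLE_congr {t u : Tab lam B} (h : rowData lam t = rowData lam u) :
    countLE t = countLE u := by
  funext k b
  rw [countLE_eq_sum_countP, countLE_eq_sum_countP, h]

lemma countLE_eq_sum_colCountLE (t : Tab lam B) (k : ℕ) (b : B) :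
    countLE t k b = ∑ j ∈ univ.image (fun p : Cell lam => p.1.2), colCountLE t j k b := by
  rw [countLE, card_eq_sum_card_fiberwise (f := fun p : Cell lam => p.1.2)
    fun p _ => mem_image_of_mem (fun p : Cell lam => p.1.2) (mem_univ p)]
  refine sum_congr rfl fun j _ => ?_
  rw [colCountLE, filter_filter]
  congr 1
  ext p
  simp only [mem_filter, mem_univ, true_and]
  tauto

lemma colCountLE_succ (t : Tab lam B) (q : Cell lam) (b : B) :
    colCountLE t q.1.2 (q.1.1 + 1) b =
      colCountLE t q.1.2 q.1.1 b + if t q ≤ b then 1 else 0 := by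
  have hsplit : (univ.filter fun p : Cell lam => p.1.2 = q.1.2 ∧ p.1.1 < q.1.1 + 1 ∧ t p ≤ b) =
      (univ.filter fun p : Cell lam => p.1.2 = q.1.2 ∧ p.1.1 < q.1.1 ∧ t p ≤ b) ∪
        univ.filter fun p => p = q ∧ t q ≤ b := by
    ext p
    simp only [mem_union, mem_filter, mem_univ, true_and]
    constructor
    · rintro ⟨hc, hr, hb⟩
      rcases Nat.lt_succ_iff_lt_or_eq.mp hr with hr | hr
      · exact Or.inl ⟨hc, hr, hb⟩
      · obtain rfl := cell_ext hr hc
        exact Or.inr ⟨rfl, hb⟩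
    · rintro (⟨hc, hr, hb⟩ | ⟨rfl, hb⟩)
      · exact ⟨hc, by omega, hb⟩
      · exact ⟨rfl, by omega, hb⟩
  rw [colCountLE, colCountLE, hsplit, card_union_of_disjoint]
  · split_ifs with hb <;> simp [hb, filter_eq']
  · simp only [disjoint_left, mem_filter, mem_univ, true_and]
    rintro p ⟨-, hr, -⟩ ⟨rfl, -⟩
    exact lt_irrefl _ hr

/-- In a column-strict tableau the entries `≤ b` of a column fill an initial segment of it, so
their number in the first `k` rows is the smaller of their total number and the number of cells of
the column in those rows; after a column permutation it can exceed neither. -/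
lemma colCountLE_permTab_le {s : Tab lam B} (hs : ColsStrict lam (· < ·) s)
    {σ : Perm (Cell lam)} (hσ : σ ∈ colGroup lam) (j k : ℕ) (b : B) :
    colCountLE (permTab lam s σ) j k b ≤ colCountLE s j k b := by
  have hperm : colCountLE (permTab lam s σ) j k b =
      #{q : Cell lam | q.1.2 = j ∧ (σ q).1.1 < k ∧ s q ≤ b} := by
    refine card_equiv σ.symm fun p => ?_
    have hcol : (σ.symm p).1.2 = p.1.2 := by simpa using (hσ (σ.symm p)).symm
    simp only [mem_filter, mem_univ, true_and]
    simp only [permTab, Perm.inv_def, apply_symm_apply, hcol]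
  have hrows :
      #{q : Cell lam | q.1.2 = j ∧ (σ q).1.1 < k} = #{q : Cell lam | q.1.2 = j ∧ q.1.1 < k} :=
    card_equiv σ fun q => by simp [hσ q]
  rw [hperm, colCountLE]
  by_cases hlow : ∃ q : Cell lam, q.1.2 = j ∧ k ≤ q.1.1 ∧ s q ≤ b
  · obtain ⟨q, hqj, hqk, hqb⟩ := hlow
    have hall : (univ.filter fun p : Cell lam => p.1.2 = j ∧ p.1.1 < k ∧ s p ≤ b) =
        univ.filter fun p : Cell lam => p.1.2 = j ∧ p.1.1 < k := by
      refine filter_congr fun p _ => ⟨fun h => ⟨h.1, h.2.1⟩, fun h => ⟨h.1, h.2, ?_⟩⟩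
      exact (hs p q (h.1.trans hqj.symm) (by omega)).le.trans hqb
    rw [hall, ← hrows]
    exact card_le_card fun q => by
      simpa only [mem_filter, mem_univ, true_and] using fun h => ⟨h.1, h.2.1⟩
  · simp only [not_exists, not_and, not_le] at hlow
    have hall : (univ.filter fun p : Cell lam => p.1.2 = j ∧ p.1.1 < k ∧ s p ≤ b) =
        univ.filter fun p : Cell lam => p.1.2 = j ∧ s p ≤ b := by
      refine filter_congr fun p _ => ⟨fun h => ⟨h.1, h.2.2⟩, fun h => ⟨h.1, ?_, h.2⟩⟩
      by_contra hk
      exact (hlow p h.1 (not_lt.mp hk)).not_ge h.2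
    rw [hall]
    exact card_le_card fun q => by
      simpa only [mem_filter, mem_univ, true_and] using fun h => ⟨h.1, h.2.2⟩

lemma countLE_permTab_le {s : Tab lam B} (hs : ColsStrict lam (· < ·) s)
    {σ : Perm (Cell lam)} (hσ : σ ∈ colGroup lam) : countLE (permTab lam s σ) ≤ countLE s := by
  intro k b
  rw [countLE_eq_sum_colCountLE, countLE_eq_sum_colCountLE]
  exact sum_le_sum fun j _ => colCountLE_permTab_le hs hσ j k b

lemma permTab_eq_of_countLE_eq {s : Tab lam B} (hs : ColsStrict lam (· < ·) s)
    {σ : Perm (Cell lam)} (hσ : σ ∈ colGroup lam) (h : countLE (permTab lam s σ) = countLE s) :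
    permTab lam s σ = s := by
  have hcol (q : Cell lam) (k : ℕ) (b : B) :
      colCountLE (permTab lam s σ) q.1.2 k b = colCountLE s q.1.2 k b := by
    have hsum := congrFun (congrFun h k) b
    rw [countLE_eq_sum_colCountLE, countLE_eq_sum_colCountLE] at hsum
    exact (sum_eq_sum_iff_of_le fun j _ => colCountLE_permTab_le hs hσ j k b).mp hsum q.1.2
      (mem_image_of_mem _ (mem_univ q))
  funext q
  have hle (b : B) : (if permTab lam s σ q ≤ b then 1 else 0) = if s q ≤ b then 1 else 0 := by
    have := hcol q (q.1.1 + 1) b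
    rwa [colCountLE_succ, colCountLE_succ, hcol, add_right_inj] at this
  exact le_antisymm (by simpa using hle (s q)) (by simpa using hle (permTab lam s σ q))

lemma eq_one_of_permTab_eq {s : Tab lam B} (hs : ColsStrict lam (· < ·) s)
    {σ : Perm (Cell lam)} (hσ : σ ∈ colGroup lam) (h : permTab lam s σ = s) : σ = 1 := by
  ext1 p
  have hp := congrFun h (σ p)
  simp only [permTab, Perm.inv_def, symm_apply_apply] at hp
  exact hs.eq_of_apply_eq (hσ p) hp.symm

lemma eq_one_and_eq_of_rowData_permTab_eq {s s₀ : Tab lam B} (hs : IsSemistd lam s)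
    (hs₀ : IsSemistd lam s₀) (hmax : countLE s₀ ≤ countLE s → countLE s ≤ countLE s₀)
    {σ : Perm (Cell lam)} (hσ : σ ∈ colGroup lam)
    (hrow : rowData lam (permTab lam s σ) = rowData lam s₀) : σ = 1 ∧ s = s₀ := by
  have hle : countLE s₀ ≤ countLE s := countLE_congr hrow ▸ countLE_permTab_le hs.2 hσ
  have hfix : permTab lam s σ = s := permTab_eq_of_countLE_eq hs.2 hσ
    ((countLE_permTab_le hs.2 hσ).antisymm (countLE_congr hrow ▸ hmax hle))
  refine ⟨eq_one_of_permTab_eq hs.2 hσ hfix, hs.1.eq_of_rowData_eq hs₀.1 ?_⟩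
  rwa [hfix] at hrow

lemma polytabloid_apply_rowData {K : Type*} [CommRing K] {s s₀ : Tab lam B}
    (hs : IsSemistd lam s) (hs₀ : IsSemistd lam s₀)
    (hmax : countLE s₀ ≤ countLE s → countLE s ≤ countLE s₀) :
    polytabloid K lam s (rowData lam s₀) = if s = s₀ then 1 else 0 := by
  rw [polytabloid_eq_sum_colGroup, Finsupp.finsetSum_apply,
    sum_eq_single (⟨1, one_mem _⟩ : colGroup lam)]
  · by_cases h : s = s₀
    · simp [h, tabloid, permTab_one]
    · have hrow : rowData lam s ≠ rowData lam s₀ := fun hrow =>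
        h (hs.1.eq_of_rowData_eq hs₀.1 hrow)
      simp [h, tabloid, permTab_one, hrow]
  · rintro ⟨σ, hσ⟩ - hσ1
    have hrow : rowData lam (permTab lam s σ) ≠ rowData lam s₀ := fun hrow =>
      hσ1 (Subtype.ext (eq_one_and_eq_of_rowData_permTab_eq hs hs₀ hmax hσ hrow).1)
    simp [tabloid, hrow]
  · simp

theorem linearIndependent_polytabloid_ssyt (K : Type*) [CommRing K] :
    LinearIndependent K (fun s : SSYT lam B => polytabloid K lam s.1) := by
  rw [linearIndependent_iff]
  intro l hl
  by_contra hne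
  obtain ⟨s₀, hs₀, hmax⟩ := l.support.exists_maximalFor (fun s => countLE s.1)
    (Finsupp.support_nonempty_iff.mpr hne)
  have hcoeff := congrArg (fun v => v (rowData lam s₀.1)) hl
  simp only [Finsupp.linearCombination_apply, Finsupp.sum, Finsupp.finsetSum_apply,
    Finsupp.smul_apply] at hcoeff
  rw [sum_eq_single s₀ (fun s hs hne => ?_) (fun h => absurd hs₀ h),
    polytabloid_apply_rowData s₀.2 s₀.2 fun _ => le_rfl, if_pos rfl, smul_eq_mul, mul_one,
    Finsupp.zero_apply] at hcoeff
  · exact Finsupp.mem_support_iff.mp hs₀ hcoeff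
  · rw [polytabloid_apply_rowData s.2 s₀.2 (hmax hs), if_neg (Subtype.coe_ne_coe.mpr hne),
      smul_zero]

end LinearIndependence

section Spanning

variable {lam : ℕ →₀ ℕ} {B : Type*} [LinearOrder B]

/-- Entries enter through their rank `#{q | t q ≤ t p}` in `ℕ`, which place permutations
preserve. -/
noncomputable def weight (f : Cell lam → ℕ) (t : Tab lam B) : ℕ :=
  ∑ p, f p * #{q | t q ≤ t p}

lemma weight_le (f : Cell lam → ℕ) (t : Tab lam B) :
    weight f t ≤ ∑ p, f p * Fintype.card (Cell lam) :=
  sum_le_sum fun _ _ => Nat.mul_le_mul_left _ (card_le_univ _)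

lemma weight_permTab (f : Cell lam → ℕ) (t : Tab lam B) (σ : Perm (Cell lam)) :
    weight f (permTab lam t σ) = ∑ p, f (σ p) * #{q | t q ≤ t p} := by
  rw [weight, ← Equiv.sum_comp σ]
  refine sum_congr rfl fun p _ => ?_
  congr 1
  refine card_equiv σ⁻¹ fun q => ?_
  simp [permTab]

lemma weight_permTab_of_forall_eq {f : Cell lam → ℕ} (t : Tab lam B) {σ : Perm (Cell lam)}
    (hσ : ∀ p, f (σ p) = f p) : weight f (permTab lam t σ) = weight f t := by
  rw [weight_permTab]
  simp only [hσ, weight]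

lemma weight_lt_weight_permTab {f : Cell lam → ℕ} {t : Tab lam B} {σ : Perm (Cell lam)} (b : B)
    (hup : ∀ q, f q < f (σ q) → b < t q) (hdown : ∀ q, f (σ q) < f q → t q ≤ b)
    (hmove : ∃ q, f (σ q) ≠ f q) : weight f t < weight f (permTab lam t σ) := by
  have hrank_lt {q : Cell lam} (hq : b < t q) : #{r | t r ≤ b} < #{r | t r ≤ t q} :=
    card_lt_card <| (ssubset_iff_of_subset fun r => by simpa using fun hr => hr.trans hq.le).mpr
      ⟨q, by simp, by simpa using hq⟩
  have hrank_le {q : Cell lam} (hq : t q ≤ b) : #{r | t r ≤ t q} ≤ #{r | t r ≤ b} :=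
    card_le_card fun r => by simpa using fun hr => hr.trans hq
  suffices 0 < ∑ q, ((f (σ q) : ℤ) - f q) * (#{r | t r ≤ t q} : ℤ) by
    rw [weight_permTab, weight]
    simp only [sub_mul, sum_sub_distrib, sub_pos] at this
    exact_mod_cast this
  refine Fintype.sum_mul_pos_of_sum_eq_zero (#{r | t r ≤ b}) ?_ (fun q hq => ?_)
    (fun q hq => ?_) ?_
  · rw [sum_sub_distrib, sub_eq_zero]
    exact Equiv.sum_comp σ fun q => (f q : ℤ)
  · exact_mod_cast hrank_lt (hup q (by omega))
  · exact_mod_cast hrank_le (hdown q (by omega))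
  · obtain ⟨q, hq⟩ := hmove
    exact ⟨q, by omega⟩

lemma weight_row_lt_permTab_swap {t : Tab lam B} {p q : Cell lam} (hrow : p.1.1 < q.1.1)
    (hlt : t q < t p) :
    weight (fun r : Cell lam => r.1.1) t < weight (fun r => r.1.1) (permTab lam t (swap p q)) := by
  have hfix {r : Cell lam} (hr : swap p q r ≠ r) : r = p ∨ r = q := by
    by_contra! h
    exact hr (swap_apply_of_ne_of_ne h.1 h.2)
  refine weight_lt_weight_permTab (t q) (fun r hr => ?_) (fun r hr => ?_) ⟨p, by simp [hrow.ne']⟩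
  · rcases hfix (fun h => hr.ne (by rw [h])) with rfl | rfl
    · exact hlt
    · simp [hrow.not_gt] at hr
  · rcases hfix (fun h => hr.ne (by rw [h])) with rfl | rfl
    · simp [hrow.not_gt] at hr
    · exact le_rfl

lemma ColsStrict.le_of_row_le {s : Tab lam B} (hs : ColsStrict lam (· < ·) s) {p q : Cell lam}
    (hcol : p.1.2 = q.1.2) (hrow : p.1.1 ≤ q.1.1) : s p ≤ s q := by
  rcases hrow.lt_or_eq with hlt | heq
  · exact (hs p q hcol hlt).le
  · rw [cell_ext heq hcol]

def garnirSet (p q : Cell lam) : Finset (Cell lam) :=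
  (univ.filter fun r : Cell lam => r.1.2 = p.1.2 ∧ p.1.1 ≤ r.1.1) ∪
    univ.filter fun r : Cell lam => r.1.2 = q.1.2 ∧ r.1.1 ≤ q.1.1

lemma card_col_lt_card_garnirSet (hlam : IsPartition lam) {p q : Cell lam}
    (hrow : p.1.1 = q.1.1) (hcol : p.1.2 < q.1.2) :
    #{r : Cell lam | r.1.2 = p.1.2} < #(garnirSet p q) := by
  have habove : #{r : Cell lam | r.1.2 = p.1.2 ∧ r.1.1 < p.1.1} ≤ p.1.1 := by
    simpa using card_le_card_of_injOn (fun r : Cell lam => r.1.1) (t := range p.1.1)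
      (fun r hr => by simp_all) (fun r hr r' hr' h => cell_ext h (by simp_all))
  -- every row down to `q`'s contains a cell in `q`'s column, since `lam` is a partition
  have hbelow : p.1.1 + 1 ≤ #{r : Cell lam | r.1.2 = q.1.2 ∧ r.1.1 ≤ q.1.1} := by
    calc p.1.1 + 1 = #(range (p.1.1 + 1)) := (card_range _).symm
      _ ≤ #(image (fun r : Cell lam => r.1.1) {r | r.1.2 = q.1.2 ∧ r.1.1 ≤ q.1.1}) :=
        card_le_card fun i hi => mem_image.mpr ⟨⟨(i, q.1.2), mem_cells.mpr
          ((mem_cells.mp q.2).trans_le (hlam _ _ (by simp at hi; omega)))⟩,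
          by simp at hi ⊢; omega, rfl⟩
      _ ≤ _ := card_image_le
  have hcolp : #{r : Cell lam | r.1.2 = p.1.2} ≤
      #{r : Cell lam | r.1.2 = p.1.2 ∧ r.1.1 < p.1.1} +
        #{r : Cell lam | r.1.2 = p.1.2 ∧ p.1.1 ≤ r.1.1} :=
    (card_le_card fun r => by simp only [mem_union, mem_filter, mem_univ, true_and]; omega).trans
      (card_union_le _ _)
  have hdisj : #(garnirSet p q) =
      #{r : Cell lam | r.1.2 = p.1.2 ∧ p.1.1 ≤ r.1.1} +
        #{r : Cell lam | r.1.2 = q.1.2 ∧ r.1.1 ≤ q.1.1} :=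
    card_union_of_disjoint (disjoint_filter.mpr fun r _ h h' => by omega)
  omega

lemma weight_col_lt_permTab_of_garnirSet {t : Tab lam B} (hcs : ColsStrict lam (· < ·) t)
    {p q : Cell lam} (hcol : p.1.2 < q.1.2) (hlt : t q < t p) {σ : Perm (Cell lam)}
    (hσX : σ ∈ fixingSubgroup (Perm (Cell lam)) ((garnirSet p q : Set (Cell lam))ᶜ))
    (hσ : σ ∉ colGroup lam) :
    weight (fun r : Cell lam => r.1.2) t < weight (fun r => r.1.2) (permTab lam t σ) := by
  have hX {r : Cell lam} (hr : (σ r).1.2 ≠ r.1.2) :=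
    mem_and_apply_mem_of_mem_fixingSubgroup_compl hσX (r := r) fun h => hr (by rw [h])
  refine weight_lt_weight_permTab (t q) (fun r hr => ?_) (fun r hr => ?_) ?_
  · obtain ⟨hrX, hσrX⟩ := hX hr.ne'
    simp only [garnirSet, mem_union, mem_filter, mem_univ, true_and] at hrX hσrX
    rcases hrX with ⟨hrp, hpr⟩ | ⟨hrq, -⟩
    · exact hlt.trans_le (hcs.le_of_row_le hrp.symm hpr)
    · omega
  · obtain ⟨hrX, hσrX⟩ := hX hr.ne
    simp only [garnirSet, mem_union, mem_filter, mem_univ, true_and] at hrX hσrX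
    rcases hrX with ⟨hrp, -⟩ | ⟨hrq, hrq'⟩
    · omega
    · exact hcs.le_of_row_le hrq hrq'
  · by_contra! h
    exact hσ h

/-- Garnir relations increase the column weight, column sorting keeps it and increases the
row weight; both are bounded, so this lexicographic potential decreases. -/
noncomputable def potential (t : Tab lam B) : ℕ ×ₗ ℕ :=
  toLex (∑ p : Cell lam, p.1.2 * Fintype.card (Cell lam) - weight (fun p => p.1.2) t,
    ∑ p : Cell lam, p.1.1 * Fintype.card (Cell lam) - weight (fun p => p.1.1) t)

lemma potential_lt_of_weight_col_lt {t u : Tab lam B}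
    (h : weight (fun p : Cell lam => p.1.2) t < weight (fun p => p.1.2) u) :
    potential u < potential t :=
  Prod.Lex.toLex_lt_toLex.mpr
    (Or.inl (by have := weight_le (fun p : Cell lam => p.1.2) u; omega))

lemma potential_lt_of_weight_row_lt {t u : Tab lam B}
    (hcol : weight (fun p : Cell lam => p.1.2) u = weight (fun p => p.1.2) t)
    (h : weight (fun p : Cell lam => p.1.1) t < weight (fun p => p.1.1) u) :
    potential u < potential t :=
  Prod.Lex.toLex_lt_toLex.mpr
    (Or.inr ⟨by rw [hcol], by have := weight_le (fun p : Cell lam => p.1.1) u; omega⟩)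

theorem polytabloid_mem_span_ssyt (hlam : IsPartition lam) (t : Tab lam B) :
    polytabloid ℤ lam t ∈
      Submodule.span ℤ (Set.range fun s : SSYT lam B => polytabloid ℤ lam s.1) := by
  induction t using (InvImage.wf (potential (lam := lam) (B := B)) wellFounded_lt).induction with
  | h t ih => ?_
  by_cases hrep : ∃ p q : Cell lam, p ≠ q ∧ p.1.2 = q.1.2 ∧ t p = t q
  · obtain ⟨p, q, hpq, hcol, h⟩ := hrep
    rw [polytabloid_eq_zero_of_apply_eq hpq hcol h]
    exact zero_mem _
  by_cases hinv : ∃ p q : Cell lam, p.1.2 = q.1.2 ∧ p.1.1 < q.1.1 ∧ t q < t p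
  · obtain ⟨p, q, hcol, hrow, hlt⟩ := hinv
    have hpq : p ≠ q := fun h => hrow.ne (by rw [h])
    have hswap : polytabloid ℤ lam t = -polytabloid ℤ lam (permTab lam t (swap p q)) := by
      simp [polytabloid_permTab t (swap_mem_colGroup hcol), Perm.sign_swap hpq]
    rw [hswap]
    refine neg_mem (ih _ (potential_lt_of_weight_row_lt ?_ (weight_row_lt_permTab_swap hrow hlt)))
    exact weight_permTab_of_forall_eq t (swap_mem_colGroup hcol)
  have hcs : ColsStrict lam (· < ·) t := fun p q hcol hrow =>
    lt_of_le_of_ne (not_lt.mp fun h => hinv ⟨p, q, hcol, hrow, h⟩)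
      fun h => hrep ⟨p, q, fun hpq => hrow.ne (by rw [hpq]), hcol, h⟩
  by_cases hrw : RowsWeak lam (· ≤ ·) t
  · exact Submodule.subset_span ⟨⟨t, hrw, hcs⟩, rfl⟩
  obtain ⟨p, q, hrow, hcol, hlt⟩ :
      ∃ p q : Cell lam, p.1.1 = q.1.1 ∧ p.1.2 ≤ q.1.2 ∧ t q < t p := by
    simpa [RowsWeak] using hrw
  have hcol' : p.1.2 < q.1.2 := hcol.lt_of_ne fun h => hlt.ne (by rw [cell_ext hrow h])
  refine Submodule.span_le.mpr ?_ (polytabloid_mem_span_garnir t (j := p.1.2) (fun r hr => ?_)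
    (card_col_lt_card_garnirSet hlam hrow hcol'))
  · rintro _ ⟨σ, ⟨hσX, hσ⟩, rfl⟩
    exact ih _ (potential_lt_of_weight_col_lt
      (weight_col_lt_permTab_of_garnirSet hcs hcol' hlt hσX hσ))
  · simp only [garnirSet, mem_union, mem_filter, mem_univ, true_and] at hr
    omega

theorem span_polytabloid_ssyt_eq_nabla (K : Type*) [CommRing K] (hlam : IsPartition lam) :
    Submodule.span K (Set.range fun s : SSYT lam B => polytabloid K lam s.1) = nabla K lam B := by
  refine le_antisymm (Submodule.span_mono (Set.range_subset_iff.mpr fun s => ⟨s.1, rfl⟩))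
    (Submodule.span_le.mpr ?_)
  rintro _ ⟨t, rfl⟩
  let φ : SymMod lam B ℤ →ₗ[ℤ] SymMod lam B K :=
    (Finsupp.mapRange.addMonoidHom (Int.castAddHom K)).toIntLinearMap
  have h := Submodule.mem_map_of_mem (f := φ) (polytabloid_mem_span_ssyt hlam t)
  rw [← Submodule.span_image, ← Set.range_comp] at h
  simp only [φ, Function.comp_def, AddMonoidHom.coe_toIntLinearMap, mapRange_polytabloid] at h
  exact Submodule.span_subset_span ℤ K _ h

end Spanning

/-- **Proposition (semistandard basis theorem).**
Let `K` be a commutative ring, `B` a totally ordered set, `V` the free `K`-module with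
basis indexed by `B`, and `lam` a partition.  Then the GL-polytabloids `F(s)`, for `s`
ranging over the semistandard `lam`-tableaux with entries from `B`, form a `K`-basis of
`∇^lam (V)`: they are linearly independent and they span `∇^lam (V)`. -/
theorem semistandard_basis (K : Type*) [CommRing K] (B : Type*) [LinearOrder B]
    (lam : ℕ →₀ ℕ) (hlam : IsPartition lam) :
    LinearIndependent K (fun s : SSYT lam B => polytabloid K lam s.1) ∧
    Submodule.span K (Set.range (fun s : SSYT lam B => polytabloid K lam s.1)) =
      nabla K lam B :=
  ⟨linearIndependent_polytabloid_ssyt K, span_polytabloid_ssyt_eq_nabla K hlam⟩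

end Pleth
end
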